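/- Let z be a maximizer of ⟨c, y⟩ over {y : ‖y‖ = r, 0 ≤ yⱼ ≤ aⱼ ∀j} where r ∈ [rᵢ, r_{i+1}]. Then z_{τⱼ} = a_{τⱼ} for all j = 1,…,i; that is, the i coordinates with the largest ratios φⱼ = cⱼ/aⱼ are saturated at their upper bounds. -/

import Mathlib

/-!
Indices are 0-based. Suppose the maximizer `z` has an unsaturated coordinate `p = τ m`, `m < i`,
and let `φ = φ_{τ_{i-1}}`. Since `‖z‖² = r² ≥ rᵢ² = φ⁻² ∑_{k ≥ i} c_{τ_k}² + ∑_{k < i} a_{τ_k}²`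
and the first `i` coordinates of `z` fall short of `a`, some tail coordinate `q = τ k`, `k ≥ i`,
satisfies `c_q < φ z_q`. Together with `φ a_p ≤ c_p` this gives `c_q z_p < c_p z_q`, which says
that rotating `z` slightly in the `(p, q)`-plane, from `q` towards `p`, increases `⟨c, z⟩` while
staying on the sphere and in the box.
-/

open Filter Topology Function

/-- Rotation by the angle `2 arctan t`, written with `cos = (1 - t²)/(1 + t²)` and
`sin = 2t/(1 + t²)`, so that every condition on `t` is polynomial. -/
lemma exists_rotation_gain {a cp cq zp zq : ℝ} (hzp : 0 ≤ zp) (hzpa : zp < a) (hzq : 0 < zq)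
    (hgain : cq * zp < cp * zq) :
    ∃ yp yq : ℝ, yp ^ 2 + yq ^ 2 = zp ^ 2 + zq ^ 2 ∧ 0 ≤ yp ∧ yp ≤ a ∧ 0 ≤ yq ∧ yq ≤ zq ∧
      cp * zp + cq * zq < cp * yp + cq * yq := by
  have h_lt_one : ∀ᶠ t in 𝓝 (0 : ℝ), t < 1 := eventually_lt_nhds one_pos
  have h_le_a : ∀ᶠ t in 𝓝 (0 : ℝ), (1 - t ^ 2) * zp + 2 * t * zq < a * (1 + t ^ 2) :=
    ContinuousAt.eventually_lt (by fun_prop) (by fun_prop) (by simpa using hzpa)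
  have h_pos : ∀ᶠ t in 𝓝 (0 : ℝ), 0 < (1 - t ^ 2) * zq - 2 * t * zp :=
    ContinuousAt.eventually_lt (by fun_prop) (by fun_prop) (by simpa using hzq)
  have h_gain : ∀ᶠ t in 𝓝 (0 : ℝ), t * (cp * zp + cq * zq) < cp * zq - cq * zp :=
    ContinuousAt.eventually_lt (by fun_prop) (by fun_prop) (by simpa using hgain)
  obtain ⟨t, ht0, ht1, hta, htq, htg⟩ : ∃ t : ℝ, 0 < t ∧ t < 1 ∧
      (1 - t ^ 2) * zp + 2 * t * zq < a * (1 + t ^ 2) ∧ 0 < (1 - t ^ 2) * zq - 2 * t * zp ∧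
      t * (cp * zp + cq * zq) < cp * zq - cq * zp :=
    (eventually_mem_nhdsWithin.and (nhdsWithin_le_nhds
      (h_lt_one.and (h_le_a.and (h_pos.and h_gain)))) : ∀ᶠ t in 𝓝[>] (0 : ℝ), _).exists
  have hd : 0 < 1 + t ^ 2 := by positivity
  refine ⟨((1 - t ^ 2) * zp + 2 * t * zq) / (1 + t ^ 2),
    ((1 - t ^ 2) * zq - 2 * t * zp) / (1 + t ^ 2), ?_, ?_, ?_, ?_, ?_, ?_⟩
  · field_simp
    ring
  · have h1t : 0 ≤ 1 - t ^ 2 := by nlinarith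
    exact div_nonneg (add_nonneg (mul_nonneg h1t hzp) (by positivity)) hd.le
  · exact (div_le_iff₀ hd).2 hta.le
  · exact div_nonneg htq.le hd.le
  · rw [div_le_iff₀ hd]
    nlinarith
  · have hincr : cp * (((1 - t ^ 2) * zp + 2 * t * zq) / (1 + t ^ 2)) +
        cq * (((1 - t ^ 2) * zq - 2 * t * zp) / (1 + t ^ 2)) =
        cp * zp + cq * zq + 2 * t * (cp * zq - cq * zp - t * (cp * zp + cq * zq)) / (1 + t ^ 2) := by
      field_simp
      ring
    have : 0 < 2 * t * (cp * zq - cq * zp - t * (cp * zp + cq * zq)) / (1 + t ^ 2) := by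
      have := sub_pos.2 htg
      positivity
    linarith

lemma Fintype.sum_apply_update_update {ι M : Type*} [Fintype ι] [DecidableEq ι]
    [AddCommGroup M] (g : ι → ℝ → M) (z : ι → ℝ) {p q : ι} (hpq : p ≠ q) (u v : ℝ) :
    ∑ j, g j (update (update z p u) q v j) =
      ∑ j, g j (z j) + (g p u - g p (z p)) + (g q v - g q (z q)) := by
  rw [add_assoc, ← sub_eq_iff_eq_add', ← Finset.sum_sub_distrib,
    Fintype.sum_eq_add p q hpq fun j ⟨hjp, hjq⟩ => by simp [hjp, hjq]]
  simp [hpq]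

variable {ι : Type*} [Fintype ι] [DecidableEq ι]

lemma mul_le_mul_of_isMax_sphere_box {a c z : ι → ℝ} (hz_box : ∀ j, 0 ≤ z j ∧ z j ≤ a j)
    (hz_max : ∀ y : ι → ℝ, ∑ j, y j ^ 2 = ∑ j, z j ^ 2 → (∀ j, 0 ≤ y j ∧ y j ≤ a j) →
      ∑ j, c j * y j ≤ ∑ j, c j * z j)
    {p q : ι} (hpq : p ≠ q) (hzp : z p < a p) (hzq : 0 < z q) :
    c p * z q ≤ c q * z p := by
  by_contra! hgain
  obtain ⟨yp, yq, hsq, hyp0, hypa, hyq0, hyqz, hlt⟩ :=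
    exists_rotation_gain (hz_box p).1 hzp hzq hgain
  set y := update (update z p yp) q yq
  have hyp : y p = yp := by simp [y, hpq]
  have hyq : y q = yq := by simp [y]
  have hy_box : ∀ j, 0 ≤ y j ∧ y j ≤ a j := by
    intro j
    by_cases hjq : j = q
    · subst hjq; exact hyq ▸ ⟨hyq0, hyqz.trans (hz_box j).2⟩
    by_cases hjp : j = p
    · subst hjp; exact hyp ▸ ⟨hyp0, hypa⟩
    · simpa [y, hjp, hjq] using hz_box j
  have hy_sphere : ∑ j, y j ^ 2 = ∑ j, z j ^ 2 := by
    rw [Fintype.sum_apply_update_update (fun _ x => x ^ 2) z hpq]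
    linarith
  have hobj := hz_max y hy_sphere hy_box
  rw [Fintype.sum_apply_update_update (fun j x => c j * x) z hpq] at hobj
  linarith

lemma exists_compl_lt_mul_of_sum_sq_le (s : Finset ι) {a c z : ι → ℝ} {φ : ℝ} (hφ : 0 < φ)
    (hz0 : ∀ j, 0 ≤ z j) (hza : ∀ j ∈ s, z j ≤ a j) {p : ι} (hp : p ∈ s) (hzp : z p < a p)
    (hr : φ⁻¹ ^ 2 * ∑ j ∈ sᶜ, c j ^ 2 + ∑ j ∈ s, a j ^ 2 ≤ ∑ j, z j ^ 2) :
    ∃ q ∉ s, c q < φ * z q := by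
  have hlow : ∑ j ∈ s, z j ^ 2 < ∑ j ∈ s, a j ^ 2 :=
    Finset.sum_lt_sum (fun j hj => pow_le_pow_left₀ (hz0 j) (hza j hj) 2)
      ⟨p, hp, pow_lt_pow_left₀ hzp (hz0 p) two_ne_zero⟩
  have hhigh : ∑ j ∈ sᶜ, (φ⁻¹ * c j) ^ 2 < ∑ j ∈ sᶜ, z j ^ 2 := by
    simp_rw [mul_pow, ← Finset.mul_sum]
    linarith [Finset.sum_add_sum_compl s fun j => z j ^ 2]
  obtain ⟨q, hq, hlt⟩ := Finset.exists_lt_of_sum_lt hhigh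
  refine ⟨q, Finset.mem_compl.1 hq, ?_⟩
  have := lt_of_pow_lt_pow_left₀ 2 (hz0 q) hlt
  rwa [inv_mul_lt_iff₀ hφ] at this

/-- saturation lemma: If `z` maximizes `⟨c,y⟩` over the
intersection of the sphere `‖y‖ = r` with the box `0 ≤ y ≤ a`, where
`r ∈ [rᵢ, r_{i+1}]`, then the `i` coordinates with the largest ratios
`φⱼ = cⱼ/aⱼ` are saturated: `z_{τⱼ} = a_{τⱼ}` for `j = 1,…,i`
(0-based: `z (τ m) = a (τ m)` for `m < i`). -/
theorem stmt_3 (R : ℕ) (hR : 1 ≤ R) (a c : Fin R → ℝ)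
    (ha : ∀ j, 0 < a j) (hc : ∀ j, 0 < c j) (τ : Equiv.Perm (Fin R))
    (hord : ∀ i j : Fin R, i ≤ j → c (τ j) / a (τ j) ≤ c (τ i) / a (τ i))
    (rseq : ℕ → ℝ)
    (hri : ∀ i, 1 ≤ i → (hiR : i ≤ R) → rseq i =
      Real.sqrt ((c (τ ⟨i - 1, by omega⟩) / a (τ ⟨i - 1, by omega⟩))⁻¹ ^ 2 *
          (∑ m ∈ Finset.univ.filter (fun m : Fin R => i ≤ (m : ℕ)), (c (τ m)) ^ 2) +
        ∑ m ∈ Finset.univ.filter (fun m : Fin R => (m : ℕ) < i), (a (τ m)) ^ 2))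
    (i : ℕ) (hi : i < R) (r : ℝ)
    (hrlo : rseq i ≤ r)
    (z : Fin R → ℝ)
    (hz_sphere : ∑ j, (z j) ^ 2 = r ^ 2)
    (hz_box : ∀ j, 0 ≤ z j ∧ z j ≤ a j)
    (hz_max : ∀ y : Fin R → ℝ, (∑ j, (y j) ^ 2 = r ^ 2) →
      (∀ j, 0 ≤ y j ∧ y j ≤ a j) → ∑ j, c j * y j ≤ ∑ j, c j * z j) :
    ∀ m : Fin R, (m : ℕ) < i → z (τ m) = a (τ m) := by
  intro m hm
  by_contra hne
  have hzp : z (τ m) < a (τ m) := (hz_box _).2.lt_of_ne hne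
  set φ := c (τ ⟨i - 1, by omega⟩) / a (τ ⟨i - 1, by omega⟩)
  have hφ : 0 < φ := div_pos (hc _) (ha _)
  have hcp : φ * a (τ m) ≤ c (τ m) :=
    (le_div_iff₀ (ha _)).1 (hord m _ (Fin.mk_le_mk.2 (by omega)))
  have htail : Finset.univ.filter (fun k : Fin R => i ≤ (k : ℕ)) =
      (Finset.univ.filter fun k : Fin R => (k : ℕ) < i)ᶜ := by
    ext; simp
  have hr := (Real.sqrt_le_iff.1 (hri i (by omega) hi.le ▸ hrlo)).2
  rw [htail, ← hz_sphere, ← Equiv.sum_comp τ] at hr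
  obtain ⟨k, hk, hck⟩ := exists_compl_lt_mul_of_sum_sq_le _ hφ (fun j => (hz_box (τ j)).1)
    (fun j _ => (hz_box (τ j)).2) (Finset.mem_filter.2 ⟨Finset.mem_univ m, hm⟩) hzp hr
  have hmk : τ m ≠ τ k := τ.injective.ne (by rintro rfl; exact hk (by simpa using hm))
  have hzq : 0 < z (τ k) := pos_of_mul_pos_right ((hc _).trans hck) hφ.le
  have := mul_le_mul_of_isMax_sphere_box hz_box (fun y hy => hz_max y (hy.trans hz_sphere))
    hmk hzp hzq
  nlinarith [mul_le_mul_of_nonneg_right hck.le (hz_box (τ m)).1,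
    mul_le_mul_of_nonneg_right hcp hzq.le, mul_lt_mul_of_pos_left hzp (mul_pos hφ hzq)]
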